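/- Let I ⊆ R = K[x_1,…,x_n] be the monomial ideal generated by x^{v_1},…,x^{v_q}, let A be the n×q matrix with columns v_1,…,v_q, and let B(Q) be the blocking polyhedron of Q(A). Then for every positive integer k, the integral closure of I^k equals the ideal generated by the monomials x^a with a an integer vector lying in kB(Q). -/

import Mathlib

open BigOperators Pointwise

/-- The monomial `x^a = x_1^{a_1} ⋯ x_n^{a_n}` in `K[x_1,…,x_n]`. -/
noncomputable def mono (K : Type*) [Field K] {n : ℕ} (a : Fin n → ℕ) :
    MvPolynomial (Fin n) K :=
  MvPolynomial.monomial (Finsupp.equivFunOnFinite.symm a) (1 : K)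

/-- The polyhedron `Q(A) = {x ∈ ℝⁿ : x ≥ 0, xA ≥ 1}`, where `A` is the
`n × q` matrix with columns `v 0, …, v (q-1)`. -/
def QA {n q : ℕ} (v : Fin q → Fin n → ℕ) : Set (Fin n → ℝ) :=
  {x | (∀ i, 0 ≤ x i) ∧ ∀ j, 1 ≤ ∑ i, x i * (v j i : ℝ)}

/-- The blocking polyhedron `B(Q) = {z ∈ ℝⁿ : z ≥ 0, ⟨z,x⟩ ≥ 1 ∀ x ∈ Q(A)}`. -/
def BQ {n q : ℕ} (v : Fin q → Fin n → ℕ) : Set (Fin n → ℝ) :=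
  {z | (∀ i, 0 ≤ z i) ∧ ∀ x ∈ QA v, 1 ≤ ∑ i, z i * x i}

/-- A set `S ⊆ ℝⁿ` has the integer decomposition property if for each `k ∈ ℕ`,
every integer vector in `k • S` is a sum of `k` integer vectors in `S`. -/
def HasIDP {n : ℕ} (S : Set (Fin n → ℝ)) : Prop :=
  ∀ (k : ℕ) (a : Fin n → ℤ), (fun i => (a i : ℝ)) ∈ (k : ℝ) • S →
    ∃ f : Fin k → Fin n → ℤ,
      (∀ j, (fun i => (f j i : ℝ)) ∈ S) ∧ a = ∑ j, f j

/-!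
Both sides are spanned by monomials, so it suffices to compare exponents. Computing `I^m`
monomially, `x^b ∈ I^m` iff `b ≥ ∑ c_j v_j` for some `c ∈ ℕ^q` with `∑ c_j = m`. Hence `x^a` is
integral over `I^k` iff `p a ≥ ∑ c_j v_j` with `∑ c_j = p k` for some `p > 0`, i.e. iff `a / k`
dominates a rational convex combination of the `v_j`. Pairing with `x ∈ Q(A)` shows that such an
`a` lies in `k B(Q)`. Conversely, separating a point of `B(Q)` from the closed convex set
`conv(v_j) + ℝⁿ₊` by Hahn–Banach produces a point of `Q(A)` violating the blocking inequality, so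
`a / k` dominates a real convex combination of the `v_j`; a Carathéodory argument makes the
coefficients rational, and clearing denominators gives `p` and `c`.
-/

section Domination

variable {n q : ℕ}

def DominatesSum (v : Fin q → Fin n → ℕ) (m : ℕ) (b : Fin n → ℕ) : Prop :=
  ∃ c : Fin q → ℕ, ∑ j, c j = m ∧ ∑ j, c j • v j ≤ b

variable {v : Fin q → Fin n → ℕ} {m : ℕ} {b b' : Fin n → ℕ}

lemma dominatesSum_zero (b : Fin n → ℕ) : DominatesSum v 0 b :=
  ⟨0, by simp, by simp⟩

lemma DominatesSum.mono (h : DominatesSum v m b) (hb : b ≤ b') : DominatesSum v m b' :=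
  let ⟨c, hc, hle⟩ := h
  ⟨c, hc, hle.trans hb⟩

lemma DominatesSum.add_generator (h : DominatesSum v m b) (j : Fin q) :
    DominatesSum v (m + 1) (b + v j) := by
  classical
  obtain ⟨c, rfl, hle⟩ := h
  refine ⟨c + Pi.single j 1, by simp [Finset.sum_add_distrib], ?_⟩
  simpa [add_smul, Finset.sum_add_distrib, Pi.single_apply, ite_smul] using
    add_le_add_right hle (v j)

end Domination

section Monomials

variable {K : Type*} [Field K] {n q : ℕ}

lemma mono_zero : mono K (0 : Fin n → ℕ) = 1 := by
  rw [mono, ← MvPolynomial.C_1, ← MvPolynomial.monomial_zero']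
  congr
  ext; rfl

lemma mono_add (a b : Fin n → ℕ) : mono K (a + b) = mono K a * mono K b := by
  rw [mono, mono, mono, MvPolynomial.monomial_mul, one_mul]
  congr
  ext; rfl

lemma mono_nsmul (p : ℕ) (a : Fin n → ℕ) : mono K (p • a) = mono K a ^ p := by
  induction p with
  | zero => simp [mono_zero]
  | succ p ih => rw [succ_nsmul, mono_add, ih, pow_succ]

lemma mono_sum {ι : Type*} (s : Finset ι) (f : ι → Fin n → ℕ) :
    mono K (∑ j ∈ s, f j) = ∏ j ∈ s, mono K (f j) := by
  classical
  induction s using Finset.induction_on with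
  | empty => simp [mono_zero]
  | insert j s hj ih => rw [Finset.sum_insert hj, Finset.prod_insert hj, mono_add, ih]

lemma mono_mem_span_image_iff (S : Set (Fin n → ℕ)) (b : Fin n → ℕ) :
    mono K b ∈ Ideal.span (mono K '' S) ↔ ∃ a ∈ S, a ≤ b := by
  classical
  rw [show mono K '' S = _ from
      (Set.image_image (fun s => MvPolynomial.monomial s (1 : K)) _ S).symm,
    MvPolynomial.mem_ideal_span_monomial_image, mono, MvPolynomial.support_monomial]
  simp only [one_ne_zero, if_false, Finset.mem_singleton, forall_eq, Set.mem_image,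
    Finsupp.le_def, Pi.le_def]
  exact ⟨fun ⟨_, ⟨a, ha, rfl⟩, hab⟩ => ⟨a, ha, hab⟩, fun ⟨a, ha, hab⟩ => ⟨_, ⟨a, ha, rfl⟩, hab⟩⟩

lemma span_mono_pow_le_span_dominatesSum (v : Fin q → Fin n → ℕ) (m : ℕ) :
    Ideal.span {f | ∃ j, f = mono K (v j)} ^ m ≤
      Ideal.span (mono K '' {b | DominatesSum v m b}) := by
  induction m with
  | zero =>
    rw [pow_zero, Ideal.one_eq_top, top_le_iff, Ideal.eq_top_iff_one]
    exact Ideal.subset_span ⟨0, dominatesSum_zero 0, mono_zero⟩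
  | succ m ih =>
    rw [pow_succ]
    refine (Ideal.mul_mono_left ih).trans ?_
    rw [Ideal.span_mul_span']
    refine Ideal.span_mono ?_
    rintro _ ⟨_, ⟨b, hb, rfl⟩, _, ⟨j, rfl⟩, rfl⟩
    exact ⟨b + v j, hb.add_generator j, mono_add b (v j)⟩

lemma mono_mem_span_pow_of_dominatesSum {v : Fin q → Fin n → ℕ} {m : ℕ} {b : Fin n → ℕ}
    (h : DominatesSum v m b) : mono K b ∈ Ideal.span {f | ∃ j, f = mono K (v j)} ^ m := by
  obtain ⟨c, rfl, hle⟩ := h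
  rw [← add_tsub_cancel_of_le hle, mono_add, mono_sum, ← Finset.prod_pow_eq_pow_sum]
  refine Ideal.mul_mem_right _ _ (Ideal.prod_mem_prod fun j _ => ?_)
  rw [mono_nsmul]
  exact Ideal.pow_mem_pow (Ideal.subset_span (Set.mem_ofPred.mpr ⟨j, rfl⟩)) _

lemma mono_mem_span_pow_iff (v : Fin q → Fin n → ℕ) (m : ℕ) (b : Fin n → ℕ) :
    mono K b ∈ Ideal.span {f | ∃ j, f = mono K (v j)} ^ m ↔ DominatesSum v m b := by
  refine ⟨fun h => ?_, mono_mem_span_pow_of_dominatesSum⟩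
  obtain ⟨a, ha, hab⟩ :=
    (mono_mem_span_image_iff _ b).mp (span_mono_pow_le_span_dominatesSum v m h)
  exact ha.mono hab

end Monomials

section RationalCones

variable {ι κ : Type*} [Fintype κ]

lemma exists_sub_mul_nonneg_eq_zero {𝕜 : Type*} [Field 𝕜] [LinearOrder 𝕜]
    [IsStrictOrderedRing 𝕜] {s : Finset ι} {c g : ι → 𝕜} (hc : ∀ j ∈ s, 0 ≤ c j)
    (hg : ∃ j ∈ s, 0 < g j) :
    ∃ ε : 𝕜, ∃ j₀ ∈ s, (∀ j ∈ s, 0 ≤ c j - ε * g j) ∧ c j₀ - ε * g j₀ = 0 := by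
  obtain ⟨j₀, hj₀, hmin⟩ := (s.filter (0 < g ·)).exists_min_image (fun j => c j / g j)
    (let ⟨j, hj, hgj⟩ := hg; ⟨j, Finset.mem_filter.mpr ⟨hj, hgj⟩⟩)
  rw [Finset.mem_filter] at hj₀
  refine ⟨c j₀ / g j₀, j₀, hj₀.1, fun j hj => ?_, by rw [div_mul_cancel₀ _ hj₀.2.ne', sub_self]⟩
  rcases le_or_gt (g j) 0 with hgj | hgj
  · have := div_nonneg (hc j₀ hj₀.1) hj₀.2.le
    nlinarith [hc j hj]
  · have := hmin j (Finset.mem_filter.mpr ⟨hj, hgj⟩)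
    rw [le_div_iff₀ hgj] at this
    linarith

/-- A `ℚ`-functional vanishing on `S` but not at `b` has rational coefficients, and the same
coefficients define a real functional vanishing on the real span of `S`. -/
lemma mem_span_of_ratCast_mem_span {S : Set (κ → ℚ)} {b : κ → ℚ}
    (h : (Rat.cast ∘ b : κ → ℝ) ∈ Submodule.span ℝ ((Rat.cast ∘ ·) '' S)) :
    b ∈ Submodule.span ℚ S := by
  classical
  by_contra hb
  obtain ⟨f, hfb, hfS⟩ := Submodule.exists_dual_map_eq_bot_of_notMem hb inferInstance
  set y : κ → ℚ := fun t => f (Pi.single t 1)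
  have hf : ∀ x, f x = x ⬝ᵥ y := fun x => by
    conv_lhs => rw [pi_eq_sum_univ' x]
    simp [map_sum, map_smul, dotProduct, y]
  have hS : ∀ x : κ → ℝ, x ∈ Submodule.span ℝ ((Rat.cast ∘ ·) '' S) →
      x ⬝ᵥ (Rat.cast ∘ y) = 0 := by
    intro x hx
    induction hx using Submodule.span_induction with
    | mem x hx =>
      obtain ⟨s, hs, rfl⟩ := hx
      have hfs := Submodule.mem_map_of_mem (f := f) (Submodule.subset_span hs)
      rw [hfS, Submodule.mem_bot, hf] at hfs
      simpa [hfs] using (RingHom.map_dotProduct (Rat.castHom ℝ) s y).symm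
    | zero => exact zero_dotProduct _
    | add x x' _ _ hx hx' => rw [add_dotProduct, hx, hx', add_zero]
    | smul r x _ hx => rw [smul_dotProduct, hx, smul_zero]
  apply hfb
  have := hS _ h
  rw [hf]
  exact (map_eq_zero_iff _ (Rat.castHom ℝ).injective).mp
    ((RingHom.map_dotProduct (Rat.castHom ℝ) b y).trans this)

lemma mem_hull_of_linearIndepOn {w : ι → κ → ℚ} {b : κ → ℚ} {s : Finset ι}
    (hli : LinearIndepOn ℝ (fun j => (Rat.cast ∘ w j : κ → ℝ)) (s : Set ι)) {c : ι → ℝ}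
    (hc : ∀ j ∈ s, 0 ≤ c j) (h : ∑ j ∈ s, c j • (Rat.cast ∘ w j : κ → ℝ) = Rat.cast ∘ b) :
    b ∈ PointedCone.hull ℚ (w '' s) := by
  have hspan : (Rat.cast ∘ b : κ → ℝ) ∈ Submodule.span ℝ ((Rat.cast ∘ ·) '' (w '' s)) := by
    rw [← h, Set.image_image]
    exact Submodule.sum_mem _ fun j hj =>
      Submodule.smul_mem _ _ (Submodule.subset_span ⟨j, hj, rfl⟩)
  obtain ⟨d, hd⟩ := (Submodule.mem_span_image_finset_iff_exists_fun' ℚ).mp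
    (mem_span_of_ratCast_mem_span hspan)
  have hdc : ∀ j ∈ s, (d j : ℝ) = c j := by
    refine fun j hj => sub_eq_zero.mp
      (linearIndepOn_finset_iff.mp hli (fun j => (d j : ℝ) - c j) ?_ j hj)
    simp only [sub_smul, Finset.sum_sub_distrib]
    rw [h, sub_eq_zero, ← hd]
    ext t
    simp [Finset.sum_apply]
  rw [← hd]
  exact Submodule.sum_mem _ fun j hj => PointedCone.smul_mem _
    (by exact_mod_cast (hdc j hj).symm ▸ hc j hj) (PointedCone.subset_hull ⟨j, hj, rfl⟩)

/-- Conic Carathéodory over `ℚ`: moving along a real linear dependency removes a generator from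
the support, and once the generators are independent the real coefficients agree with the rational
ones. -/
lemma mem_hull_of_ratCast_eq_sum (w : ι → κ → ℚ) (b : κ → ℚ) (s : Finset ι) (c : ι → ℝ)
    (hc : ∀ j ∈ s, 0 ≤ c j) (h : ∑ j ∈ s, c j • (Rat.cast ∘ w j : κ → ℝ) = Rat.cast ∘ b) :
    b ∈ PointedCone.hull ℚ (w '' s) := by
  classical
  induction s using Finset.strongInduction generalizing c with
  | H s ih =>
  by_cases hli : LinearIndepOn ℝ (fun j => (Rat.cast ∘ w j : κ → ℝ)) (s : Set ι)
  · exact mem_hull_of_linearIndepOn hli hc h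
  obtain ⟨g, hg, hpos⟩ : ∃ g : ι → ℝ, ∑ j ∈ s, g j • (Rat.cast ∘ w j : κ → ℝ) = 0 ∧
      ∃ j ∈ s, 0 < g j := by
    obtain ⟨g, hg, j, hj, hgj⟩ := not_linearIndepOn_finset_iff.mp hli
    rcases hgj.lt_or_gt with hgj | hgj
    · exact ⟨-g, by simp [neg_smul, hg], j, hj, by simpa using hgj⟩
    · exact ⟨g, hg, j, hj, hgj⟩
  obtain ⟨ε, j₀, hj₀, hnonneg, hzero⟩ := exists_sub_mul_nonneg_eq_zero hc hpos
  have hsum :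
      ∑ j ∈ s.erase j₀, (c j - ε * g j) • (Rat.cast ∘ w j : κ → ℝ) = Rat.cast ∘ b := by
    rw [Finset.sum_erase _ (by rw [hzero, zero_smul])]
    simp only [sub_smul, mul_smul, Finset.sum_sub_distrib, ← Finset.smul_sum, hg, h, smul_zero,
      sub_zero]
  exact Submodule.span_mono (Set.image_mono (Finset.erase_subset j₀ s))
    (ih _ (Finset.erase_ssubset hj₀) _ (fun j hj => hnonneg j (Finset.mem_of_mem_erase hj)) hsum)

lemma exists_nonneg_sum_smul_eq_of_ratCast [Fintype ι] (w : ι → κ → ℚ) (b : κ → ℚ)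
    (c : ι → ℝ) (hc : 0 ≤ c) (h : ∑ j, c j • (Rat.cast ∘ w j : κ → ℝ) = Rat.cast ∘ b) :
    ∃ d : ι → ℚ, 0 ≤ d ∧ ∑ j, d j • w j = b := by
  have hb := mem_hull_of_ratCast_eq_sum w b Finset.univ c (fun j _ => hc j) h
  rw [Finset.coe_univ, Set.image_univ] at hb
  obtain ⟨d, hd⟩ := (Submodule.mem_span_range_iff_exists_fun _).mp hb
  exact ⟨fun j => d j, fun j => (d j).2, hd⟩

lemma exists_pos_nat_mul_eq_natCast [Fintype ι] (d : ι → ℚ) (hd : 0 ≤ d) :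
    ∃ p : ℕ, 0 < p ∧ ∃ c : ι → ℕ, ∀ j, (c j : ℚ) = p * d j := by
  refine ⟨∏ j, (d j).den, Finset.prod_pos fun j _ => (d j).den_pos, ?_⟩
  have : ∀ j, ∃ m : ℕ, (m : ℚ) = (∏ j, (d j).den : ℕ) * d j := fun j => by
    obtain ⟨e, he⟩ := Finset.dvd_prod_of_mem (fun j => (d j).den) (Finset.mem_univ j)
    refine ⟨e * (d j).num.toNat, ?_⟩
    rw [he, Nat.cast_mul, Nat.cast_mul, mul_comm ((d j).den : ℚ), mul_assoc, Rat.den_mul_eq_num]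
    congr 1
    exact_mod_cast Int.toNat_of_nonneg (Rat.num_nonneg.mpr (hd j))
  choose c hc using this
  exact ⟨c, hc⟩

end RationalCones

section Homogenization

variable {n q : ℕ}

/-- The columns of the matrix `[1 ⋯ 1 0; A I]`: a combination of them with coefficients `(l, r)`
equals `(k, a)` iff `∑ l = k` and `A l + r = a`. -/
def homogenizedColumns (R : Type*) [Semiring R] (v : Fin q → Fin n → ℕ) :
    Fin q ⊕ Fin n → Fin (n + 1) → R :=
  Sum.elim (fun j => Fin.cons 1 fun i => (v j i : R)) fun i => Fin.cons 0 (Pi.single i 1)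

lemma sum_smul_homogenizedColumns {R : Type*} [CommSemiring R] (v : Fin q → Fin n → ℕ)
    (l : Fin q → R) (r : Fin n → R) :
    ∑ x, Sum.elim l r x • homogenizedColumns R v x =
      Fin.cons (∑ j, l j) ((∑ j, l j • fun i => (v j i : R)) + r) := by
  classical
  ext t
  refine Fin.cases ?_ (fun i => ?_) t <;>
    simp [homogenizedColumns, Fintype.sum_sum_type, Finset.sum_apply, Pi.single_apply]

lemma ratCast_comp_homogenizedColumns (v : Fin q → Fin n → ℕ) (x : Fin q ⊕ Fin n) :
    (Rat.cast ∘ homogenizedColumns ℚ v x : Fin (n + 1) → ℝ) = homogenizedColumns ℝ v x := by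
  ext t
  rcases x with j | i <;> refine Fin.cases ?_ (fun i' => ?_) t <;>
    simp [homogenizedColumns, Pi.single_apply, apply_ite]

end Homogenization

lemma nonneg_of_forall_lt_add_mul {a b u : ℝ} (h : ∀ t : ℝ, 0 ≤ t → u < a + t * b) : 0 ≤ b := by
  by_contra! hb
  have hua := h 0 le_rfl
  have := h ((a - u) / -b) (div_nonneg (by linarith) (by linarith))
  rw [div_mul_eq_mul_div, div_neg, mul_div_cancel_right₀ _ hb.ne] at this
  linarith

section BlockingPolyhedron

variable {n q : ℕ} {v : Fin q → Fin n → ℕ}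

lemma DominatesSum.natCast_le_sum_mul {m : ℕ} {b : Fin n → ℕ} (h : DominatesSum v m b)
    {x : Fin n → ℝ} (hx : x ∈ QA v) : (m : ℝ) ≤ ∑ i, (b i : ℝ) * x i := by
  obtain ⟨c, rfl, hle⟩ := h
  calc ((∑ j, c j : ℕ) : ℝ) ≤ ∑ j, (c j : ℝ) * ∑ i, x i * (v j i : ℝ) := by
        push_cast
        exact Finset.sum_le_sum fun j _ => le_mul_of_one_le_right (Nat.cast_nonneg _) (hx.2 j)
    _ = ∑ i, ((∑ j, c j • v j) i : ℝ) * x i := by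
        simp only [Finset.sum_apply, Pi.smul_apply, smul_eq_mul, Nat.cast_sum, Nat.cast_mul,
          Finset.mul_sum, Finset.sum_mul]
        rw [Finset.sum_comm]
        exact Finset.sum_congr rfl fun i _ => Finset.sum_congr rfl fun j _ => by ring
    _ ≤ ∑ i, (b i : ℝ) * x i :=
        Finset.sum_le_sum fun i _ =>
          mul_le_mul_of_nonneg_right (by exact_mod_cast hle i) (hx.1 i)

lemma natCast_mem_smul_BQ_of_dominatesSum {p k : ℕ} {a : Fin n → ℕ} (hp : 0 < p)
    (hk : 0 < k) (h : DominatesSum v (p * k) (p • a)) : (fun i => (a i : ℝ)) ∈ (k : ℝ) • BQ v := by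
  have hk' : (0 : ℝ) < k := by exact_mod_cast hk
  rw [Set.mem_smul_set_iff_inv_smul_mem₀ hk'.ne']
  refine ⟨fun i => by simp only [Pi.smul_apply, smul_eq_mul]; positivity, fun x hx => ?_⟩
  have hpk := h.natCast_le_sum_mul hx
  simp only [Pi.smul_apply, smul_eq_mul, Nat.cast_mul, mul_assoc, ← Finset.mul_sum] at hpk ⊢
  rw [le_inv_mul_iff₀ hk', mul_one]
  exact le_of_mul_le_mul_left hpk (by exact_mod_cast hp)

lemma exists_mem_stdSimplex_sum_le_of_mem_BQ {z : Fin n → ℝ} (hz : z ∈ BQ v) :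
    ∃ l ∈ stdSimplex ℝ (Fin q), ∑ j, l j • (fun i => (v j i : ℝ)) ≤ z := by
  classical
  obtain hq | ⟨⟨j₀⟩⟩ := isEmpty_or_nonempty (Fin q)
  · have := hz.2 0 ⟨fun _ => le_rfl, isEmptyElim⟩
    simp only [Finset.sum_const_zero, Pi.zero_apply, mul_zero] at this
    exact absurd this (by norm_num)
  set L := Fintype.linearCombination ℝ fun j i => (v j i : ℝ)
  set C := L '' stdSimplex ℝ (Fin q) + Set.Ici 0
  suffices z ∈ C by
    obtain ⟨_, ⟨l, hl, rfl⟩, r, hr, rfl⟩ := this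
    exact ⟨l, hl, le_add_of_nonneg_right (a := L l) hr⟩
  by_contra hzC
  have hC_closed : IsClosed C := isClosed_Ici.add_left_of_isCompact
    ((isCompact_stdSimplex ℝ (Fin q)).image L.continuous_of_finiteDimensional)
  have hC_convex : Convex ℝ C := ((convex_stdSimplex ℝ _).linear_image L).add (convex_Ici 0)
  obtain ⟨φ, u, hφz, hφC⟩ := geometric_hahn_banach_point_closed hC_convex hC_closed hzC
  set y : Fin n → ℝ := fun i => φ (Pi.single i 1)
  have hφ : ∀ w, φ w = w ⬝ᵥ y := fun w => by
    conv_lhs => rw [pi_eq_sum_univ' w]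
    simp [map_sum, map_smul, dotProduct, y]
  have hsep : ∀ j, ∀ r, 0 ≤ r → u < (fun i => (v j i : ℝ)) ⬝ᵥ y + r ⬝ᵥ y := fun j r hr => by
    simpa [hφ, add_dotProduct, L] using
      hφC _ (Set.add_mem_add ⟨Pi.single j 1, single_mem_stdSimplex ℝ j, rfl⟩ hr)
  have hy : 0 ≤ y := fun i => nonneg_of_forall_lt_add_mul fun t ht => by
    simpa [smul_dotProduct, single_dotProduct] using
      hsep j₀ (t • Pi.single i 1) (smul_nonneg ht (Pi.single_nonneg.mpr zero_le_one))
  have hu : 0 < u := (dotProduct_nonneg_of_nonneg hz.1 hy).trans_lt (hφ z ▸ hφz)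
  have hx : u⁻¹ • y ∈ QA v := by
    refine ⟨smul_nonneg (inv_nonneg.2 hu.le) hy, fun j => ?_⟩
    have := hsep j 0 le_rfl
    rw [zero_dotProduct, add_zero, dotProduct_comm] at this
    change 1 ≤ (u⁻¹ • y) ⬝ᵥ _
    rw [smul_dotProduct, smul_eq_mul, le_inv_mul_iff₀ hu, mul_one]
    exact this.le
  have h1 : 1 ≤ z ⬝ᵥ (u⁻¹ • y) := hz.2 _ hx
  rw [dotProduct_smul, smul_eq_mul, le_inv_mul_iff₀ hu, mul_one, ← hφ] at h1
  exact hφz.not_ge h1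

lemma exists_rat_weights_of_mem_smul_BQ {k : ℕ} {a : Fin n → ℕ}
    (h : (fun i => (a i : ℝ)) ∈ (k : ℝ) • BQ v) :
    ∃ d : Fin q → ℚ, 0 ≤ d ∧ ∑ j, d j = k ∧
      ∑ j, d j • (fun i => (v j i : ℚ)) ≤ fun i => (a i : ℚ) := by
  obtain ⟨z, hz, hkz⟩ := h
  obtain ⟨l, hl, hle⟩ := exists_mem_stdSimplex_sum_le_of_mem_BQ hz
  set y := ∑ j, l j • fun i => (v j i : ℝ)
  have hreal : ∑ x, Sum.elim ((k : ℝ) • l) ((k : ℝ) • (z - y)) x •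
      (Rat.cast ∘ homogenizedColumns ℚ v x : Fin (n + 1) → ℝ) =
        Rat.cast ∘ Fin.cons (k : ℚ) fun i => (a i : ℚ) := by
    simp_rw [ratCast_comp_homogenizedColumns, sum_smul_homogenizedColumns, Fin.comp_cons]
    congr 1
    · simp [← Finset.mul_sum, hl.2]
    · ext i
      have hi := congrFun hkz i
      simp only [Pi.smul_apply, smul_eq_mul] at hi
      simp [y, ← hi, mul_assoc, ← Finset.mul_sum]
      ring
  have hnonneg : 0 ≤ Sum.elim ((k : ℝ) • l) ((k : ℝ) • (z - y)) := by
    rintro (j | i)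
    · exact mul_nonneg (Nat.cast_nonneg k) (hl.1 j)
    · exact mul_nonneg (Nat.cast_nonneg k) (sub_nonneg.mpr (hle i))
  obtain ⟨d, hd, hdb⟩ := exists_nonneg_sum_smul_eq_of_ratCast _ _ _ hnonneg hreal
  rw [← Sum.elim_comp_inl_inr d, sum_smul_homogenizedColumns, Fin.cons_inj] at hdb
  exact ⟨d ∘ Sum.inl, fun j => hd _, hdb.1, hdb.2 ▸ le_add_of_nonneg_right fun i => hd _⟩

lemma exists_dominatesSum_of_mem_smul_BQ {k : ℕ} {a : Fin n → ℕ}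
    (h : (fun i => (a i : ℝ)) ∈ (k : ℝ) • BQ v) :
    ∃ p, 0 < p ∧ DominatesSum v (p * k) (p • a) := by
  obtain ⟨d, hd, hsum, hle⟩ := exists_rat_weights_of_mem_smul_BQ h
  obtain ⟨p, hp, c, hc⟩ := exists_pos_nat_mul_eq_natCast d hd
  refine ⟨p, hp, c, ?_, fun i => ?_⟩
  · exact_mod_cast (show ((∑ j, c j : ℕ) : ℚ) = p * k by
      push_cast [hc]; rw [← Finset.mul_sum, hsum])
  · have := mul_le_mul_of_nonneg_left (hle i) (Nat.cast_nonneg (α := ℚ) p)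
    simp only [Finset.sum_apply, Pi.smul_apply, smul_eq_mul, Finset.mul_sum] at this ⊢
    exact_mod_cast (show ((∑ j, c j * v j i : ℕ) : ℚ) ≤ ((p * a i : ℕ) : ℚ) by
      push_cast [hc]; simpa [mul_assoc] using this)

lemma exists_pow_mem_span_pow_iff_mem_smul_BQ (K : Type*) [Field K] {k : ℕ} (hk : 0 < k)
    (a : Fin n → ℕ) :
    (∃ p : ℕ, 0 < p ∧ mono K a ^ p ∈ Ideal.span {f | ∃ j, f = mono K (v j)} ^ (p * k)) ↔
      (fun i => (a i : ℝ)) ∈ (k : ℝ) • BQ v := by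
  simp only [← mono_nsmul, mono_mem_span_pow_iff]
  exact ⟨fun ⟨_, hp, h⟩ => natCast_mem_smul_BQ_of_dominatesSum hp hk h,
    exists_dominatesSum_of_mem_smul_BQ⟩

end BlockingPolyhedron

/-- For the monomial ideal `I = (x^{v_1},…,x^{v_q})` and every
`k ≥ 1`, the integral closure of `I^k` equals the ideal generated by the
monomials `x^a` with `a` an integer vector lying in `k·B(Q)`. -/
theorem integralClosure_pow_eq_span_lattice_points_of_dilated_blocking_polyhedron
    (K : Type*) [Field K] (n q : ℕ) (v : Fin q → Fin n → ℕ)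
    (I : Ideal (MvPolynomial (Fin n) K))
    (hI : I = Ideal.span {f | ∃ j, f = mono K (v j)})
    (k : ℕ) (hk : 1 ≤ k) :
    Ideal.span {f | ∃ a : Fin n → ℕ, f = mono K a ∧
        ∃ p : ℕ, 0 < p ∧ mono K a ^ p ∈ I ^ (p * k)}
      = Ideal.span {f | ∃ a : Fin n → ℕ, f = mono K a ∧
          (fun i => (a i : ℝ)) ∈ (k : ℝ) • BQ v} := by
  subst hI
  congr 1
  ext f
  exact exists_congr fun a => and_congr_right fun _ =>
    exists_pow_mem_span_pow_iff_mem_smul_BQ K hk a
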